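/- arXiv:2304.11429 — 8 statements merged into one kernel-verified Lean document; each statement's English description precedes it below -/
import Mathlib

section
/- Let r and s be rays in the plane with distinct apices P = p(r) and Q = p(s). Suppose A and B are points of ℝ², each distinct from P and from Q, satisfying d∠(A, r) = d∠(A, s) and d∠(B, r) = d∠(B, s). Then the four points P, Q, A, B lie on a common circle or on a common line (they are cospherical or collinear). -/
noncomputable section

open Real

abbrev Pt : Type := EuclideanSpace ℝ (Fin 2)

instance : Fact (Module.finrank ℝ Pt = 2) := ⟨finrank_euclideanSpace_fin⟩

noncomputable def stdOrient : Orientation ℝ Pt (Fin 2) :=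
  (EuclideanSpace.basisFun (Fin 2) ℝ).toBasis.orientation

/-- A ray in the plane, given by its apex and its direction vector. -/
structure Ray2 where
  apex : Pt
  dir : Pt

/-- The set of points of a ray. -/
def Ray2.carrier (r : Ray2) : Set Pt := {x | ∃ t : ℝ, 0 ≤ t ∧ x = r.apex + t • r.dir}

/-- The representative in `[0, 2π)` of an angle. -/
noncomputable def angleIco (θ : Real.Angle) : ℝ :=
  if 0 ≤ θ.toReal then θ.toReal else θ.toReal + 2 * π

open Classical in
/-- The counterclockwise angular distance from a point `x` to a ray `r`. -/
noncomputable def adist (x : Pt) (r : Ray2) : ℝ :=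
  if x = r.apex then 0 else angleIco (stdOrient.oangle r.dir (x - r.apex))

/-- The Voronoi region of a ray `r` in a finite set of rays `R`. -/
def rreg (R : Finset Ray2) (r : Ray2) : Set Pt :=
  {x | ∀ s ∈ R, s ≠ r → adist x r < adist x s}

/-- The rotating rays Voronoi diagram. -/
def RVD (R : Finset Ray2) : Set Pt :=
  (Set.univ \ ⋃ r ∈ R, rreg R r) ∪ ⋃ r ∈ R, r.carrier

/-- The point of the plane with the given coordinates. -/
noncomputable def pt (a b : ℝ) : Pt := (WithLp.equiv 2 (Fin 2 → ℝ)).symm ![a, b]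

theorem angleIco_coe (θ : Real.Angle) : (↑(angleIco θ) : Real.Angle) = θ := by
  unfold angleIco
  split_ifs with h
  · exact θ.coe_toReal
  · rw [Real.Angle.coe_add, Real.Angle.coe_two_pi, add_zero]
    exact θ.coe_toReal

theorem angleIco_inj {θ φ : Real.Angle} (h : angleIco θ = angleIco φ) : θ = φ := by
  rw [← angleIco_coe θ, ← angleIco_coe φ, h]

/-- Any two points, distinct from the apices, that are equidistant (in angular
distance) to two rays with distinct apices are cospherical or collinear with the two apices. -/
theorem stmt0 (r s : Ray2) (hr : r.dir ≠ 0) (hs : s.dir ≠ 0)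
    (hPQ : r.apex ≠ s.apex) (A B : Pt)
    (hAP : A ≠ r.apex) (hAQ : A ≠ s.apex) (hBP : B ≠ r.apex) (hBQ : B ≠ s.apex)
    (hA : adist A r = adist A s) (hB : adist B r = adist B s) :
    EuclideanGeometry.Cospherical ({r.apex, s.apex, A, B} : Set Pt) ∨
      Collinear ℝ ({r.apex, s.apex, A, B} : Set Pt) := by
  letI : Module.Oriented ℝ Pt (Fin 2) := ⟨stdOrient⟩
  have hA' : stdOrient.oangle r.dir (A - r.apex) = stdOrient.oangle s.dir (A - s.apex) := by
    apply angleIco_inj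
    simpa [adist, hAP, hAQ] using hA
  have hB' : stdOrient.oangle r.dir (B - r.apex) = stdOrient.oangle s.dir (B - s.apex) := by
    apply angleIco_inj
    simpa [adist, hBP, hBQ] using hB
  have key : ∀ X : Pt, X ≠ r.apex → X ≠ s.apex →
      stdOrient.oangle r.dir (X - r.apex) = stdOrient.oangle s.dir (X - s.apex) →
      stdOrient.oangle (X - r.apex) (X - s.apex) = stdOrient.oangle r.dir s.dir := by
    intro X hXP hXQ hX
    have h1 : X - r.apex ≠ 0 := sub_ne_zero.mpr hXP
    have h2 : X - s.apex ≠ 0 := sub_ne_zero.mpr hXQ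
    have e1 : stdOrient.oangle (X - r.apex) r.dir + stdOrient.oangle r.dir (X - s.apex)
        = stdOrient.oangle (X - r.apex) (X - s.apex) := stdOrient.oangle_add h1 hr h2
    have e2 : stdOrient.oangle r.dir s.dir + stdOrient.oangle s.dir (X - s.apex)
        = stdOrient.oangle r.dir (X - s.apex) := stdOrient.oangle_add hr hs h2
    have e3 : stdOrient.oangle (X - r.apex) r.dir = - stdOrient.oangle r.dir (X - r.apex) :=
      stdOrient.oangle_rev _ _
    rw [← e1, ← e2, e3, ← hX]
    abel
  have hAo : stdOrient.oangle (A - r.apex) (A - s.apex) = stdOrient.oangle r.dir s.dir :=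
    key A hAP hAQ hA'
  have hBo : stdOrient.oangle (B - r.apex) (B - s.apex) = stdOrient.oangle r.dir s.dir :=
    key B hBP hBQ hB'
  have hang : EuclideanGeometry.oangle r.apex A s.apex = EuclideanGeometry.oangle r.apex B s.apex := by
    show stdOrient.oangle (r.apex -ᵥ A) (s.apex -ᵥ A)
        = stdOrient.oangle (r.apex -ᵥ B) (s.apex -ᵥ B)
    have : ∀ X : Pt, stdOrient.oangle (r.apex -ᵥ X) (s.apex -ᵥ X)
        = stdOrient.oangle (X - r.apex) (X - s.apex) := by
      intro X
      rw [vsub_eq_sub, vsub_eq_sub, ← stdOrient.oangle_neg_neg, neg_sub, neg_sub]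
    rw [this A, this B, hAo, hBo]
  have h2 : (2 : ℤ) • EuclideanGeometry.oangle r.apex A s.apex
      = (2 : ℤ) • EuclideanGeometry.oangle r.apex B s.apex := by rw [hang]
  have := EuclideanGeometry.cospherical_or_collinear_of_two_zsmul_oangle_eq h2
  have hset : ({r.apex, A, B, s.apex} : Set Pt) = {r.apex, s.apex, A, B} := by
    ext x; simp only [Set.mem_insert_iff, Set.mem_singleton_iff]; tauto
  rwa [hset] at this
end
end

section
/- Let r and s be rays in the plane with distinct apices P = p(r) and Q = p(s) whose supporting lines intersect in exactly one point I, and assume I ≠ P and I ≠ Q (hence P, Q, I are not collinear). Then every point x with x ≠ P, x ≠ Q and d∠(x, r) = d∠(x, s) lies on the unique circle passing through P, Q and I (the bisecting circle of r and s). -/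
/-! Equal angular distances say that `u(r)` turns onto `x - P` by the same oriented angle as
`u(s)` onto `x - Q`; hence the oriented angle `∡ P x Q` equals the angle from `u(r)` to `u(s)`.
Since `P - I` and `Q - I` are nonzero multiples of `u(r)` and `u(s)`, this is also `∡ P I Q`
modulo `π`, and the inscribed angle theorem puts `x` on the circle through the non-collinear
points `P`, `I`, `Q`. -/

noncomputable section

open Real

/-- The supporting line of a ray: the line through `p` with direction `u`. -/
def lineThrough (p u : Pt) : Set Pt := {x | ∃ t : ℝ, x = p + t • u}

theorem coe_angleIco (θ : Real.Angle) : ((angleIco θ : ℝ) : Real.Angle) = θ := by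
  unfold angleIco
  split_ifs
  · exact θ.coe_toReal
  · rw [Real.Angle.coe_add, Real.Angle.coe_two_pi, add_zero, θ.coe_toReal]

theorem coe_adist {x : Pt} {r : Ray2} (hx : x ≠ r.apex) :
    (adist x r : Real.Angle) = stdOrient.oangle r.dir (x - r.apex) := by
  rw [adist, if_neg hx, coe_angleIco]

theorem Orientation.oangle_sub_sub_eq_of_oangle_eq {V : Type*} [NormedAddCommGroup V]
    [InnerProductSpace ℝ V] [Fact (Module.finrank ℝ V = 2)] (o : Orientation ℝ V (Fin 2))
    {p q x u v : V} (hu : u ≠ 0) (hv : v ≠ 0) (hp : x ≠ p) (hq : x ≠ q)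
    (h : o.oangle u (x - p) = o.oangle v (x - q)) :
    o.oangle (p - x) (q - x) = o.oangle u v := by
  have hp' : x - p ≠ 0 := sub_ne_zero.mpr hp
  have hq' : x - q ≠ 0 := sub_ne_zero.mpr hq
  rw [← neg_sub x p, ← neg_sub x q, o.oangle_neg_neg, ← o.oangle_add hp' hu hq',
    ← o.oangle_add hu hv hq', o.oangle_rev, h]
  abel

theorem not_collinear_of_lineThrough_inter_eq_singleton {P Q I u v : Pt}
    (hI : lineThrough P u ∩ lineThrough Q v = {I}) (hIP : I ≠ P) (hIQ : I ≠ Q) :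
    ¬ Collinear ℝ ({P, I, Q} : Set Pt) := by
  intro hcol
  obtain ⟨b, hb⟩ : I ∈ lineThrough Q v := (hI.ge rfl).2
  have hP : P ∈ line[ℝ, Q, I] :=
    hcol.mem_affineSpan_of_mem_of_ne (by simp) (by simp) (by simp) hIQ.symm
  rw [← vsub_vadd P Q, vadd_left_mem_affineSpan_pair] at hP
  obtain ⟨t, ht⟩ := hP
  have hPv : P ∈ lineThrough Q v :=
    ⟨t * b, by rw [← vsub_vadd P Q, ← ht, hb, vsub_eq_sub, vadd_eq_add]; module⟩
  exact hIP (hI.le ⟨⟨0, by simp⟩, hPv⟩).symm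

theorem stmt1_general (r s : Ray2)
    (I : Pt) (hI : lineThrough r.apex r.dir ∩ lineThrough s.apex s.dir = {I})
    (hIP : I ≠ r.apex) (hIQ : I ≠ s.apex)
    (x : Pt) (hxP : x ≠ r.apex) (hxQ : x ≠ s.apex) (hx : adist x r = adist x s) :
    EuclideanGeometry.Cospherical ({r.apex, s.apex, I, x} : Set Pt) := by
  let : Module.Oriented ℝ Pt (Fin 2) := ⟨stdOrient⟩
  obtain ⟨⟨a, ha⟩, ⟨b, hb⟩⟩ : I ∈ lineThrough r.apex r.dir ∩ lineThrough s.apex s.dir := hI ▸ rfl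
  have hPI : r.apex - I = (-a) • r.dir := by rw [ha]; module
  have hQI : s.apex - I = (-b) • s.dir := by rw [hb]; module
  obtain ⟨ha0, hr⟩ := smul_ne_zero_iff.mp (hPI ▸ sub_ne_zero.mpr hIP.symm)
  obtain ⟨hb0, hs⟩ := smul_ne_zero_iff.mp (hQI ▸ sub_ne_zero.mpr hIQ.symm)
  have hangle : (2 : ℤ) • EuclideanGeometry.oangle r.apex I s.apex
      = (2 : ℤ) • EuclideanGeometry.oangle r.apex x s.apex := by
    change (2 : ℤ) • stdOrient.oangle (r.apex - I) (s.apex - I)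
      = (2 : ℤ) • stdOrient.oangle (r.apex - x) (s.apex - x)
    rw [hPI, hQI, stdOrient.two_zsmul_oangle_smul_left_of_ne_zero _ _ ha0,
      stdOrient.two_zsmul_oangle_smul_right_of_ne_zero _ _ hb0,
      stdOrient.oangle_sub_sub_eq_of_oangle_eq hr hs hxP hxQ
        (by rw [← coe_adist hxP, ← coe_adist hxQ, hx])]
  have hcos := EuclideanGeometry.cospherical_of_two_zsmul_oangle_eq_of_not_collinear hangle
    (not_collinear_of_lineThrough_inter_eq_singleton hI hIP hIQ)
  rwa [Set.pair_comm x s.apex, Set.insert_comm I s.apex] at hcos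

/-- if the supporting lines of two rays with distinct apices `P`, `Q` meet in
exactly one point `I` distinct from both apices, then every point equidistant to the
two rays lies on the unique circle through `P`, `Q` and `I`. -/
theorem stmt1 (r s : Ray2) (hr : r.dir ≠ 0) (hs : s.dir ≠ 0) (hPQ : r.apex ≠ s.apex)
    (I : Pt) (hI : lineThrough r.apex r.dir ∩ lineThrough s.apex s.dir = {I})
    (hIP : I ≠ r.apex) (hIQ : I ≠ s.apex)
    (x : Pt) (hxP : x ≠ r.apex) (hxQ : x ≠ s.apex) (hx : adist x r = adist x s) :
    EuclideanGeometry.Cospherical ({r.apex, s.apex, I, x} : Set Pt) :=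
  stmt1_general r s I hI hIP hIQ x hxP hxQ hx
end
end

section
/- Let n ≥ 1 and, for 0 ≤ i < n, let r_i be the ray with apex (i, 0) and direction (1, 0). Then sSup { min_{0 ≤ i < n} d∠(x, r_i) : x ∈ ℝ² } = 2π; that is, the upper bound 2π for the Brocard angle of the plane is attained by n parallel collinear rays. -/
noncomputable section

open Real

/-! A point at depth `ε` below the line of the apexes and at least `1` to the right of all of
them sees every ray under an angle `2π + arg (x - apex) ≥ 2π - arcsin ε`. Letting `ε → 0` pushes
the minimum over the rays to `2π`, while every angular distance is `< 2π`. -/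

lemma pt_sub (a b c d : ℝ) : pt a b - pt c d = pt (a - c) (b - d) := by
  ext i; fin_cases i <;> simp [pt]

lemma pt_ne_pt_of_snd_ne {a b c d : ℝ} (h : b ≠ d) : pt a b ≠ pt c d := by
  intro hpt
  exact h (by simpa [pt] using congrArg (fun v : Pt => v 1) hpt)

lemma stdOrient_areaForm_apply (x y : Pt) : stdOrient.areaForm x y = x 0 * y 1 - x 1 * y 0 := by
  rw [Orientation.areaForm_to_volumeForm,
    stdOrient.volumeForm_robust (EuclideanSpace.basisFun (Fin 2) ℝ) rfl,
    Module.Basis.det_apply, Matrix.det_fin_two]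
  simp only [Module.Basis.toMatrix_apply, Matrix.cons_val_zero, Matrix.cons_val_one,
    Matrix.cons_val_fin_one, OrthonormalBasis.coe_toBasis_repr_apply,
    EuclideanSpace.basisFun_repr]
  ring

lemma stdOrient_oangle_pt_one_zero (a b : ℝ) :
    stdOrient.oangle (pt 1 0) (pt a b) = (Complex.arg ⟨a, b⟩ : Real.Angle) := by
  have hkahler : stdOrient.kahler (pt 1 0) (pt a b) = ⟨a, b⟩ := by
    apply Complex.ext <;>
      simp [Orientation.kahler_apply_apply, stdOrient_areaForm_apply, PiLp.inner_apply,
        Fin.sum_univ_two, pt]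
  rw [Orientation.oangle, hkahler]

lemma angleIco_lt_two_pi (θ : Real.Angle) : angleIco θ < 2 * π := by
  unfold angleIco
  split_ifs with h
  · linarith [θ.toReal_le_pi, pi_pos]
  · linarith

lemma adist_lt_two_pi (x : Pt) (r : Ray2) : adist x r < 2 * π := by
  unfold adist
  split_ifs
  · positivity
  · exact angleIco_lt_two_pi _

lemma angleIco_coe_of_neg {θ : ℝ} (hπ : -π < θ) (hθ : θ < 0) : angleIco θ = θ + 2 * π := by
  have htoReal : (θ : Real.Angle).toReal = θ :=
    Real.Angle.toReal_coe_eq_self_iff.mpr ⟨hπ, by linarith [pi_pos]⟩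
  rw [angleIco, htoReal, if_neg hθ.not_ge]

lemma neg_arcsin_le_arg {c ε : ℝ} (hc : 1 ≤ c) (hε : 0 < ε) :
    -arcsin ε ≤ Complex.arg ⟨c, -ε⟩ := by
  set z : ℂ := ⟨c, -ε⟩
  have hnorm : 1 ≤ ‖z‖ := hc.trans ((le_abs_self c).trans (Complex.abs_re_le_norm z))
  rw [Complex.arg_of_re_nonneg (by simp only [z]; linarith), ← arcsin_neg]
  refine arcsin_le_arcsin ?_
  rw [show z.im = -ε from rfl, neg_div, neg_le_neg_iff]
  exact div_le_self hε.le hnorm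

lemma two_pi_sub_arcsin_le_adist {a b ε : ℝ} (hab : a + 1 ≤ b) (hε : 0 < ε) :
    2 * π - arcsin ε ≤ adist (pt b (-ε)) ⟨pt a 0, pt 1 0⟩ := by
  have hne : pt b (-ε) ≠ pt a 0 := pt_ne_pt_of_snd_ne (by linarith)
  have harg_neg : Complex.arg ⟨b - a, -ε⟩ < 0 := Complex.arg_neg_iff.mpr (neg_neg_of_pos hε)
  rw [adist, if_neg hne, pt_sub, sub_zero, stdOrient_oangle_pt_one_zero,
    angleIco_coe_of_neg (Complex.neg_pi_lt_arg _) harg_neg]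
  linarith [neg_arcsin_le_arg (c := b - a) (by linarith) hε]

lemma exists_pos_arcsin_lt {δ : ℝ} (hδ : 0 < δ) : ∃ ε > 0, arcsin ε < δ := by
  have harcsin : Filter.Tendsto arcsin (nhdsWithin 0 (Set.Ioi 0)) (nhds 0) := by
    simpa using continuous_arcsin.continuousWithinAt.tendsto (x := 0) (s := Set.Ioi 0)
  obtain ⟨ε, hsmall, hpos⟩ :=
    ((harcsin.eventually (gt_mem_nhds hδ)).and self_mem_nhdsWithin).exists
  exact ⟨ε, hpos, hsmall⟩

/-- `n` parallel collinear rays attain the upper bound `2π` for the Brocard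
angle of the plane. -/
theorem stmt7 (n : ℕ) (hn : 1 ≤ n) :
    sSup {y : ℝ | ∃ x : Pt,
        y = (Finset.range n).inf' (Finset.nonempty_range_iff.mpr (by omega))
          fun i => adist x ⟨pt i 0, pt 1 0⟩} = 2 * π := by
  refine csSup_eq_of_forall_le_of_forall_lt_exists_gt ⟨_, 0, rfl⟩ ?_ ?_
  · rintro _ ⟨x, rfl⟩
    exact ((Finset.inf'_le _ (Finset.mem_range.mpr hn)).trans_lt (adist_lt_two_pi x _)).le
  · intro w hw
    obtain ⟨ε, hε, hsmall⟩ := exists_pos_arcsin_lt (sub_pos.mpr hw)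
    refine ⟨_, ⟨pt n (-ε), rfl⟩, (Finset.lt_inf'_iff _).mpr fun i hi => ?_⟩
    have hin : (i : ℝ) + 1 ≤ n := by exact_mod_cast Finset.mem_range.mp hi
    linarith [two_pi_sub_arcsin_le_adist hin hε]

end
end

section
/- Let R be a finite set of rays in the plane with pairwise distinct apices and pairwise linearly independent direction vectors (no two rays parallel or anti-parallel). Then for every r ∈ R there exists t₀ ≥ 0 such that p(r) + t • u(r) ∈ rreg(r) for all t ≥ t₀. In particular, every Voronoi region rreg(r) is nonempty and unbounded, and its unbounded part is incident to the ray r itself. -/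
noncomputable section

open Real

lemma angleIco_pos {θ : Real.Angle} (h : θ ≠ 0) : 0 < angleIco θ := by
  unfold angleIco
  rcases le_or_gt 0 θ.toReal with h0 | h0
  · rw [if_pos h0]
    rcases h0.lt_or_eq with h1 | h1
    · exact h1
    · exact absurd (Real.Angle.toReal_eq_zero_iff.mp h1.symm) h
  · rw [if_neg (not_le.mpr h0)]
    have := Real.Angle.neg_pi_lt_toReal θ
    linarith [Real.pi_pos]

lemma adist_on_ray (r : Ray2) {t : ℝ} (ht : 0 ≤ t) : adist (r.apex + t • r.dir) r = 0 := by
  by_cases h : r.apex + t • r.dir = r.apex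
  · simp [adist, h]
  · rw [adist, if_neg h]
    have hx : r.apex + t • r.dir - r.apex = t • r.dir := by abel
    have ht' : 0 < t := by
      rcases ht.lt_or_eq with h1 | h1
      · exact h1
      · exact absurd (by simp [← h1]) h
    rw [hx, stdOrient.oangle_smul_right_of_pos _ _ ht', Orientation.oangle_self]
    simp [angleIco]

/-- if the rays have pairwise distinct apices and pairwise linearly independent
directions, each ray eventually enters (and stays in) its own Voronoi region; in particular
every region is nonempty and unbounded, incident to its ray. -/
theorem stmt8 (R : Finset Ray2)
    (hapex : ∀ r ∈ R, ∀ s ∈ R, r ≠ s → r.apex ≠ s.apex)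
    (hdir : ∀ r ∈ R, ∀ s ∈ R, r ≠ s → LinearIndependent ℝ ![r.dir, s.dir]) :
    ∀ r ∈ R, ∃ t₀ : ℝ, 0 ≤ t₀ ∧ ∀ t : ℝ, t₀ ≤ t → r.apex + t • r.dir ∈ rreg R r := by
  intro r hr
  classical
  set B : Set ℝ := ⋃ s ∈ R.erase r,
      {t : ℝ | r.apex + t • r.dir - s.apex ∈ Submodule.span ℝ {s.dir}} with hB
  have hfin : B.Finite := by
    refine Set.Finite.biUnion (Set.finite_mem_finset _) (fun s hs => ?_)
    have hsR := Finset.mem_of_mem_erase hs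
    have hsne : s ≠ r := Finset.ne_of_mem_erase hs
    have hli := hdir r hr s hsR hsne.symm
    obtain ⟨hsd, hnd⟩ := linearIndependent_fin2.mp hli
    apply Set.Subsingleton.finite
    intro t1 ht1 t2 ht2
    by_contra hne
    have hmem : (t1 - t2) • r.dir ∈ Submodule.span ℝ {s.dir} := by
      have ht1' : r.apex + t1 • r.dir - s.apex ∈ Submodule.span ℝ {s.dir} := ht1
      have ht2' : r.apex + t2 • r.dir - s.apex ∈ Submodule.span ℝ {s.dir} := ht2
      have := Submodule.sub_mem (Submodule.span ℝ {s.dir}) ht1' ht2' 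
      have heq : (r.apex + t1 • r.dir - s.apex) - (r.apex + t2 • r.dir - s.apex)
          = (t1 - t2) • r.dir := by
        rw [sub_smul]; abel
      rwa [heq] at this
    have hdm : r.dir ∈ Submodule.span ℝ {s.dir} := by
      have h12 : t1 - t2 ≠ 0 := sub_ne_zero.mpr hne
      have := Submodule.smul_mem _ (t1 - t2)⁻¹ hmem
      rwa [smul_smul, inv_mul_cancel₀ h12, one_smul] at this
    obtain ⟨a, ha⟩ := Submodule.mem_span_singleton.mp hdm
    exact hnd a ha
  obtain ⟨C, hC⟩ := hfin.bddAbove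
  refine ⟨max 0 (C + 1), le_max_left _ _, fun t ht => ?_⟩
  have ht0 : 0 ≤ t := le_trans (le_max_left _ _) ht
  have htB : t ∉ B := by
    intro h
    have := hC h
    have : C + 1 ≤ t := le_trans (le_max_right _ _) ht
    linarith
  intro s hsR hsne
  rw [adist_on_ray r ht0]
  set x := r.apex + t • r.dir with hx
  have hnotbad : x - s.apex ∉ Submodule.span ℝ {s.dir} := by
    intro h
    exact htB (Set.mem_biUnion (Finset.mem_erase.mpr ⟨hsne, hsR⟩) h)
  have hxs : x ≠ s.apex := by
    intro h
    exact hnotbad (by rw [h, sub_self]; exact Submodule.zero_mem _)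
  have hli := hdir r hr s hsR hsne.symm
  obtain ⟨hsd, -⟩ := linearIndependent_fin2.mp hli
  rw [adist, if_neg hxs]
  apply angleIco_pos
  intro h0
  have hray := (stdOrient.oangle_eq_zero_iff_sameRay).mp h0
  by_cases hv : x - s.apex = 0
  · exact hxs (sub_eq_zero.mp hv)
  · obtain ⟨c, d, hc, hd, hce⟩ := hray.exists_pos hsd hv
    refine hnotbad (Submodule.mem_span_singleton.mpr ⟨d⁻¹ * c, ?_⟩)
    rw [mul_smul, hce, smul_smul, inv_mul_cancel₀ (ne_of_gt hd), one_smul]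
end
end

section
/- Let p, q ∈ ℝ² with p ≠ q, and let u, v ∈ ℝ² be nonzero vectors such that ⟪u, q − p⟫ ≤ 0 and ⟪v, p − q⟫ ≤ 0 (each direction makes a non-acute angle with the segment toward the other apex). Then the rays {p + t • u : t ≥ 0} and {q + t • v : t ≥ 0} are disjoint. -/
noncomputable section

open Real

section

variable {E : Type*} [NormedAddCommGroup E] [InnerProductSpace ℝ E]

theorem norm_sub_sq_eq_of_add_smul_eq {p q u v : E} {s t : ℝ} (h : p + s • u = q + t • v) :
    ‖q - p‖ ^ 2 = s * inner ℝ u (q - p) + t * inner ℝ v (p - q) := by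
  have hqp : q - p = s • u - t • v := by
    rw [sub_eq_sub_iff_add_eq_add, ← h, add_comm]
  have hpq : p - q = -(q - p) := (neg_sub q p).symm
  rw [← real_inner_self_eq_norm_sq, hpq, inner_neg_right]
  nth_rewrite 1 [hqp]
  rw [inner_sub_left, real_inner_smul_left, real_inner_smul_left]
  ring

theorem add_smul_ne_add_smul_of_inner_nonpos {p q u v : E} {s t : ℝ} (hpq : p ≠ q)
    (hu : inner ℝ u (q - p) ≤ 0) (hv : inner ℝ v (p - q) ≤ 0) (hs : 0 ≤ s) (ht : 0 ≤ t) :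
    p + s • u ≠ q + t • v := by
  intro h
  have hpos : 0 < ‖q - p‖ ^ 2 := pow_pos (norm_pos_iff.mpr (sub_ne_zero.mpr hpq.symm)) 2
  rw [norm_sub_sq_eq_of_add_smul_eq h] at hpos
  linarith [mul_nonpos_of_nonneg_of_nonpos hs hu, mul_nonpos_of_nonneg_of_nonpos ht hv]

end

theorem stmt11_general (p q u v : Pt) (hpq : p ≠ q)
    (h1 : (inner ℝ u (q - p) : ℝ) ≤ 0) (h2 : (inner ℝ v (p - q) : ℝ) ≤ 0) :
    Ray2.carrier ⟨p, u⟩ ∩ Ray2.carrier ⟨q, v⟩ = ∅ := by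
  refine Set.eq_empty_iff_forall_notMem.mpr ?_
  rintro x ⟨⟨s, hs, rfl⟩, t, ht, hx⟩
  exact add_smul_ne_add_smul_of_inner_nonpos hpq h1 h2 hs ht hx

/-- two rays whose directions make non-acute angles with the segment toward
the other apex are disjoint. -/
theorem stmt11 (p q u v : Pt) (hpq : p ≠ q) (hu : u ≠ 0) (hv : v ≠ 0)
    (h1 : (inner ℝ u (q - p) : ℝ) ≤ 0) (h2 : (inner ℝ v (p - q) : ℝ) ≤ 0) :
    Ray2.carrier ⟨p, u⟩ ∩ Ray2.carrier ⟨q, v⟩ = ∅ :=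
  stmt11_general p q u v hpq h1 h2
end
end

section
/- Let R be a finite nonempty set of rays in the plane with pairwise distinct apices and pairwise linearly independent direction vectors. Then the closure of the union of all Voronoi regions covers the plane: closure(⋃_{r ∈ R} rreg(r)) = ℝ². -/
/-! A point `x` that is not in any Voronoi region is at equal angular distance from two distinct
rays `r`, `s` of `R`. Away from the apices `p = r.apex`, `q = s.apex`, equality of the angular
distances at `x` says that `q` and `p` are seen from `x` under the fixed oriented angle from
`s.dir` to `r.dir`, which is neither `0` nor `π` because the directions are independent. By the
inscribed angle theorem such points lie on a circle, so every tie set is Lebesgue-null, and a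
set with null complement is dense. -/

noncomputable section

open Real

open EuclideanGeometry MeasureTheory Module

section InscribedAngle

variable {V : Type*} [NormedAddCommGroup V] [InnerProductSpace ℝ V] [Fact (finrank ℝ V = 2)]
  [Module.Oriented ℝ V (Fin 2)]

theorem exists_sphere_superset_setOf_oangle_eq (p q : V) {θ : Real.Angle} (h0 : θ ≠ 0)
    (hπ : θ ≠ π) : ∃ c : V, ∃ ρ : ℝ, {x | ∡ q x p = θ} ⊆ Metric.sphere c ρ := by
  rcases Set.eq_empty_or_nonempty {x | ∡ q x p = θ} with hempty | ⟨x₀, hx₀⟩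
  · exact ⟨0, 0, hempty.subset.trans (Set.empty_subset _)⟩
  have hx₀ : ∡ q x₀ p = θ := hx₀
  have hindep : ¬Collinear ℝ ({q, x₀, p} : Set V) :=
    oangle_ne_zero_and_ne_pi_iff_not_collinear.1 ⟨hx₀ ▸ h0, hx₀ ▸ hπ⟩
  let t : Affine.Triangle ℝ V := ⟨![q, x₀, p], affineIndependent_iff_not_collinear_set.2 hindep⟩
  refine ⟨t.circumsphere.center, t.circumsphere.radius, fun x (hx : ∡ q x p = θ) => ?_⟩
  have hmem : x ∈ t.circumsphere :=
    Affine.Triangle.mem_circumsphere_of_two_zsmul_oangle_eq (i₁ := 0) (i₂ := 1) (i₃ := 2)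
      (by decide) (by decide) (by decide) (by simp [t, hx, hx₀])
  exact EuclideanGeometry.mem_sphere.1 hmem

theorem measure_setOf_oangle_eq [MeasurableSpace V] [BorelSpace V] (μ : Measure V)
    [μ.IsAddHaarMeasure] (p q : V) {θ : Real.Angle} (h0 : θ ≠ 0) (hπ : θ ≠ π) :
    μ {x | ∡ q x p = θ} = 0 := by
  have : FiniteDimensional ℝ V := .of_fact_finrank_eq_succ 1
  have : Nontrivial V := nontrivial_of_finrank_eq_succ (Fact.out : finrank ℝ V = 2)
  obtain ⟨c, ρ, hsub⟩ := exists_sphere_superset_setOf_oangle_eq p q h0 hπ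
  exact measure_mono_null hsub (Measure.addHaar_sphere μ c ρ)

end InscribedAngle

instance : Module.Oriented ℝ Pt (Fin 2) := ⟨stdOrient⟩

theorem angleIco_injective : Function.Injective angleIco := by
  intro θ φ h
  have := θ.toReal_le_pi
  have := θ.neg_pi_lt_toReal
  have := φ.toReal_le_pi
  have := φ.neg_pi_lt_toReal
  have := pi_pos
  unfold angleIco at h
  apply Real.Angle.toReal_injective
  split_ifs at h <;> linarith

theorem oangle_apex_eq_of_adist_eq {x : Pt} {r s : Ray2} (hu : r.dir ≠ 0) (hv : s.dir ≠ 0)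
    (hp : x ≠ r.apex) (hq : x ≠ s.apex) (h : adist x r = adist x s) :
    ∡ s.apex x r.apex = stdOrient.oangle s.dir r.dir := by
  have hxp : x - r.apex ≠ 0 := sub_ne_zero.2 hp
  have hxq : x - s.apex ≠ 0 := sub_ne_zero.2 hq
  have hangle : stdOrient.oangle r.dir (x - r.apex) = stdOrient.oangle s.dir (x - s.apex) := by
    apply angleIco_injective
    simpa only [adist, if_neg hp, if_neg hq] using h
  have hoangle : ∡ s.apex x r.apex = stdOrient.oangle (x - s.apex) (x - r.apex) := by
    change stdOrient.oangle (s.apex -ᵥ x) (r.apex -ᵥ x) = _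
    rw [vsub_eq_sub, vsub_eq_sub, ← neg_sub x, ← neg_sub x, stdOrient.oangle_neg_neg]
  rw [hoangle, ← stdOrient.oangle_add hxq hv hxp, ← stdOrient.oangle_add hv hu hxp, hangle,
    stdOrient.oangle_rev s.dir]
  abel

theorem volume_setOf_adist_eq {r s : Ray2} (hdir : LinearIndependent ℝ ![r.dir, s.dir]) :
    volume {x : Pt | adist x r = adist x s} = 0 := by
  have hθ := (stdOrient.oangle_ne_zero_and_ne_pi_iff_linearIndependent
    (x := s.dir) (y := r.dir)).2 (LinearIndependent.pair_symm_iff.1 hdir)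
  have hsub : {x : Pt | adist x r = adist x s} ⊆
      {r.apex, s.apex} ∪ {x | ∡ s.apex x r.apex = stdOrient.oangle s.dir r.dir} := by
    intro x hx
    by_cases hp : x = r.apex
    · exact Or.inl (Or.inl hp)
    by_cases hq : x = s.apex
    · exact Or.inl (Or.inr hq)
    exact Or.inr (oangle_apex_eq_of_adist_eq (hdir.ne_zero 0) (hdir.ne_zero 1) hp hq hx)
  refine measure_mono_null hsub (measure_union_null ?_ ?_)
  · exact (Set.toFinite _).measure_zero volume
  · exact measure_setOf_oangle_eq volume _ _ hθ.1 hθ.2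

theorem exists_mem_rreg {R : Finset Ray2} (hR : R.Nonempty) {x : Pt}
    (hx : ∀ r ∈ R, ∀ s ∈ R, r ≠ s → adist x r ≠ adist x s) : ∃ r ∈ R, x ∈ rreg R r := by
  obtain ⟨r, hr, hmin⟩ := R.exists_min_image (adist x) hR
  exact ⟨r, hr, fun s hs hsr => (hmin s hs).lt_of_ne (hx r hr s hs hsr.symm)⟩

theorem stmt12_general (R : Finset Ray2) (hR : R.Nonempty)
    (hdir : ∀ r ∈ R, ∀ s ∈ R, r ≠ s → LinearIndependent ℝ ![r.dir, s.dir]) :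
    closure (⋃ r ∈ R, rreg R r) = Set.univ := by
  let ties : Set Pt := ⋃ r ∈ R, ⋃ s ∈ R, {x | r ≠ s ∧ adist x r = adist x s}
  have hties : volume ties = 0 := by
    refine (measure_biUnion_null_iff R.countable_toSet).2 fun r hr =>
      (measure_biUnion_null_iff R.countable_toSet).2 fun s hs => ?_
    by_cases hrs : r = s
    · simp [hrs]
    · exact measure_mono_null (fun x hx => hx.2)
        (volume_setOf_adist_eq (hdir r hr s hs hrs))
  have hsub : {x | x ∉ ties} ⊆ ⋃ r ∈ R, rreg R r := fun x hx => by
    obtain ⟨r, hr, hxr⟩ := exists_mem_rreg hR fun r hr s hs hrs heq =>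
      hx (Set.mem_biUnion hr (Set.mem_biUnion hs ⟨hrs, heq⟩))
    exact Set.mem_biUnion hr hxr
  exact ((Measure.dense_of_ae (measure_eq_zero_iff_ae_notMem.1 hties)).mono hsub).closure_eq

/-- axiom (A3): the closure of the union of all Voronoi regions covers
the plane. -/
theorem stmt12 (R : Finset Ray2) (hR : R.Nonempty)
    (hapex : ∀ r ∈ R, ∀ s ∈ R, r ≠ s → r.apex ≠ s.apex)
    (hdir : ∀ r ∈ R, ∀ s ∈ R, r ≠ s → LinearIndependent ℝ ![r.dir, s.dir]) :
    closure (⋃ r ∈ R, rreg R r) = Set.univ :=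
  stmt12_general R hR hdir
end
end

section
/- Let p ∈ ℝ² and let F be a finite family of subsets of ℝ², each member of which is either an open ball Metric.ball c ρ or the complement of a closed ball (Metric.closedBall c ρ)ᶜ, where in each case ρ > 0 and dist p c = ρ (so p lies on the bounding circle). Then the intersection ⋂₀ F is a preconnected subset of ℝ². -/
/-!
Invert the plane in the unit circle centred at `p`. A circle through `p` with centre `c`
becomes the perpendicular bisector of `p` and the image `q` of `c`; the open disc goes to the
open half-plane of points closer to `q` than to `p`, and the exterior of the circle, minus `p`,
to the open half-plane of points closer to `p`. Hence the intersection is the image, under the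
inversion (continuous away from `p`), of a convex open set with the point `p` removed, and a
convex open set in dimension at least two stays connected after removing a point.
-/

noncomputable section

open Real

open Set Metric EuclideanGeometry

theorem Convex.isPreconnected_diff_singleton {E : Type*} [NormedAddCommGroup E]
    [NormedSpace ℝ E] (hE : 1 < Module.rank ℝ E) {U : Set E} (hU : Convex ℝ U)
    (hUo : IsOpen U) (x : E) : IsPreconnected (U \ {x}) := by
  by_cases hx : x ∈ U
  swap
  · simpa [sdiff_singleton_eq_self hx] using hU.isPreconnected
  obtain ⟨r, hr, hball⟩ := Metric.isOpen_iff.1 hUo x hx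
  have hsphere : sphere x (r / 2) ⊆ U \ {x} := fun y hy =>
    ⟨hball (sphere_subset_ball (by linarith) hy),
      ne_of_mem_sphere hy (by positivity : r / 2 ≠ 0)⟩
  have : Nontrivial E := (rank_pos_iff_nontrivial (R := ℝ)).1 (zero_lt_one.trans hE)
  obtain ⟨z, hz⟩ := (NormedSpace.sphere_nonempty (x := x)).2 (by positivity : 0 ≤ r / 2)
  refine isPreconnected_of_forall z fun a ⟨haU, hax⟩ => ?_
  have hax : a - x ≠ 0 := sub_ne_zero.2 hax
  -- `w` is the radial projection of `a` to the sphere; the segment from `a` to `w` avoids `x`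
  set c : ℝ := r / 2 / ‖a - x‖
  have hc : 0 < c := by positivity
  set w := x + c • (a - x)
  have hw : w ∈ sphere x (r / 2) := by
    simp [w, norm_smul, c, abs_of_pos hr, hax]
  have hseg : segment ℝ a w ⊆ U \ {x} := by
    refine fun y hy => ⟨hU.segment_subset haU (hsphere hw).1 hy, ?_⟩
    rintro rfl
    rw [mem_segment_iff_sameRay, show y - a = -(a - y) by abel, show w - y = c • (a - y) by
      simp [w]] at hy
    exact (sameRay_neg_smul_right_iff.1 hy).elim (fun h => h.not_gt hc) hax
  refine ⟨segment ℝ a w ∪ sphere x (r / 2), union_subset hseg hsphere, Or.inr hz,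
    Or.inl (left_mem_segment ℝ a w), ?_⟩
  exact (convex_segment a w).isPreconnected.union w (right_mem_segment ℝ a w) hw
    (isPreconnected_sphere hE x _)

open scoped RealInnerProductSpace in
theorem convex_setOf_dist_lt_dist {E : Type*} [NormedAddCommGroup E] [InnerProductSpace ℝ E]
    (a b : E) : Convex ℝ {z | dist z a < dist z b} := by
  have h : {z | dist z a < dist z b} = {z | ⟪b - a, z⟫ < (‖b‖ ^ 2 - ‖a‖ ^ 2) / 2} := by
    ext z
    simp only [mem_ofPred_eq, dist_eq_norm]
    rw [← pow_lt_pow_iff_left₀ (norm_nonneg _) (norm_nonneg _) two_ne_zero,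
      norm_sub_sq_real, norm_sub_sq_real, inner_sub_left, real_inner_comm a, real_inner_comm b]
    constructor <;> intro h <;> linarith
  rw [h]
  exact convex_halfSpace_lt (innerₛₗ ℝ (b - a)).isLinear _

namespace EuclideanGeometry

variable {V P : Type*} [NormedAddCommGroup V] [InnerProductSpace ℝ V] [MetricSpace P]
  [NormedAddTorsor V P] {c x y : P} {R : ℝ}

theorem dist_inversion_inversion_eq_div_mul (hx : x ≠ c) (hy : y ≠ c) :
    dist (inversion c R x) (inversion c R y) = dist x y / dist y c * dist (inversion c R x) c := by
  rw [dist_inversion_inversion hx hy, dist_inversion_center]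
  ring

theorem preimage_inversion_setOf_dist_inversion_lt_dist_center (hR : R ≠ 0) (hy : y ≠ c) :
    inversion c R ⁻¹' {z | dist z (inversion c R y) < dist z c} = ball y (dist y c) := by
  ext x
  rcases eq_or_ne x c with rfl | hx
  · simp [dist_comm]
  have hx' : 0 < dist (inversion c R x) c := dist_pos.2 ((inversion_eq_center hR).not.2 hx)
  rw [mem_preimage, mem_ofPred_eq, dist_inversion_inversion_eq_div_mul hx hy,
    mul_lt_iff_lt_one_left hx', div_lt_one (dist_pos.2 hy), mem_ball]

theorem preimage_inversion_setOf_dist_center_lt_dist_inversion_diff (hR : R ≠ 0) (hy : y ≠ c) :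
    inversion c R ⁻¹' {z | dist z c < dist z (inversion c R y)} \ {c} =
      (closedBall y (dist y c))ᶜ := by
  ext x
  rcases eq_or_ne x c with rfl | hx
  · simp [dist_comm]
  have hx' : 0 < dist (inversion c R x) c := dist_pos.2 ((inversion_eq_center hR).not.2 hx)
  rw [mem_sdiff, mem_preimage, mem_ofPred_eq, dist_inversion_inversion_eq_div_mul hx hy,
    lt_mul_iff_one_lt_left hx', one_lt_div (dist_pos.2 hy), mem_compl_iff, mem_closedBall, not_le]
  simp [hx]

end EuclideanGeometry

theorem Set.sInter_eq_preimage_biInter_sdiff {α β : Type*} {F : Set (Set α)} (hF : F.Nonempty)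
    {f : α → β} {H : Set α → Set β} {q : β} (hS : ∀ S ∈ F, S = f ⁻¹' (H S \ {q})) :
    ⋂₀ F = f ⁻¹' ((⋂ S ∈ F, H S) \ {q}) := by
  rw [sInter_eq_biInter, iInter₂_congr hS]
  simp only [← preimage_iInter₂, sdiff_eq, biInter_inter hF]

theorem exists_eq_preimage_inversion_setOf_dist_lt_dist_diff {E : Type*}
    [NormedAddCommGroup E] [InnerProductSpace ℝ E] {p c : E} {ρ : ℝ} {S : Set E} (hρ : 0 < ρ)
    (hpc : dist p c = ρ) (hS : S = ball c ρ ∨ S = (closedBall c ρ)ᶜ) :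
    ∃ a b : E, S = inversion p 1 ⁻¹' ({z | dist z a < dist z b} \ {p}) := by
  have hcp : c ≠ p := (dist_pos.1 (hpc ▸ hρ)).symm
  have hp : inversion p 1 ⁻¹' {p} = {p} := by ext; simp
  simp only [preimage_sdiff, hp]
  rw [← hpc, dist_comm] at hS
  rcases hS with rfl | rfl
  · refine ⟨inversion p 1 c, p, ?_⟩
    rw [preimage_inversion_setOf_dist_inversion_lt_dist_center one_ne_zero hcp,
      sdiff_singleton_eq_self (by simp [dist_comm])]
  · exact ⟨p, inversion p 1 c,
      (preimage_inversion_setOf_dist_center_lt_dist_inversion_diff one_ne_zero hcp).symm⟩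

/-- a finite intersection of open disks and of complements of closed disks,
all of whose bounding circles pass through a common point `p`, is preconnected. -/
theorem stmt13 (p : Pt) (F : Finset (Set Pt))
    (hF : ∀ S ∈ F, ∃ (c : Pt) (ρ : ℝ), 0 < ρ ∧ dist p c = ρ ∧
      (S = Metric.ball c ρ ∨ S = (Metric.closedBall c ρ)ᶜ)) :
    IsPreconnected (⋂₀ (F : Set (Set Pt))) := by
  rcases F.eq_empty_or_nonempty with rfl | hne
  · simpa using isPreconnected_univ
  have hS : ∀ S ∈ F, ∃ a b : Pt, S = inversion p 1 ⁻¹' ({z | dist z a < dist z b} \ {p}) :=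
    fun S hS =>
      let ⟨_, _, hρ, hpc, hS⟩ := hF S hS
      exists_eq_preimage_inversion_setOf_dist_lt_dist_diff hρ hpc hS
  choose! a b hS using hS
  let T := ⋂ S ∈ F, {z | dist z (a S) < dist z (b S)}
  have hTc : Convex ℝ T := convex_iInter₂ fun S _ => convex_setOf_dist_lt_dist (a S) (b S)
  have hTo : IsOpen T := isOpen_biInter_finset fun S _ =>
    isOpen_lt (continuous_id.dist continuous_const) (continuous_id.dist continuous_const)
  have hrank : 1 < Module.rank ℝ Pt := by
    rw [← Module.finrank_eq_rank, finrank_euclideanSpace_fin]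
    norm_num
  have hinv := inversion_involutive p (one_ne_zero : (1 : ℝ) ≠ 0)
  have hinter : ⋂₀ (F : Set (Set Pt)) = inversion p 1 '' (T \ {p}) := by
    rw [image_eq_preimage_of_inverse hinv hinv]
    exact sInter_eq_preimage_biInter_sdiff hne.to_set hS
  rw [hinter]
  exact (hTc.isPreconnected_diff_singleton hrank hTo p).image _
    (continuousOn_const.inversion continuousOn_const continuousOn_id fun _ hx => hx.2)
end
end

section
/- Let n ≥ 3 and, for 0 ≤ k < n, let v_k = (cos(2πk/n), sin(2πk/n)) be the vertices of a regular n-gon inscribed in the unit circle, and let r_k be the ray with apex v_k and direction v_{k+1} − v_k (indices modulo n). Then the angular distance from each edge-aligned ray to the center equals π/2 − π/n, i.e., d∠(0, r_k) = π/2 − π/n for every k. (Hence the upper bound π/2 − π/n for the Brocard angle of a convex n-gon is attained by regular polygons, at their center.) -/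
noncomputable section

open Real

lemma neg_pt (a b : ℝ) : -pt a b = pt (-a) (-b) := by
  ext i
  fin_cases i <;> simp [pt]

lemma pt_ne_zero_of_sq_add_sq_ne_zero {a b : ℝ} (h : a ^ 2 + b ^ 2 ≠ 0) : pt a b ≠ 0 := by
  intro h0
  have ha : a = 0 := congrArg (· 0) h0
  have hb : b = 0 := congrArg (· 1) h0
  simp [ha, hb] at h

lemma kahler_pt (a b c d : ℝ) :
    stdOrient.kahler (pt a b) (pt c d) = ⟨a * c + b * d, a * d - b * c⟩ := by
  rw [Orientation.kahler_apply_apply, Orientation.areaForm_to_volumeForm,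
    stdOrient.volumeForm_robust (EuclideanSpace.basisFun (Fin 2) ℝ) rfl]
  apply Complex.ext <;>
    simp [pt, PiLp.inner_apply, Fin.sum_univ_two, Module.Basis.det_apply, Matrix.det_fin_two,
      Module.Basis.toMatrix] <;> ring

lemma kahler_chord_neg (θ φ : ℝ) :
    stdOrient.kahler (pt (cos (θ + φ)) (sin (θ + φ)) - pt (cos θ) (sin θ))
      (-pt (cos θ) (sin θ)) = ⟨1 - cos φ, sin φ⟩ := by
  rw [pt_sub, neg_pt, kahler_pt, cos_add, sin_add]
  congr 1
  · linear_combination (1 - cos φ) * sin_sq_add_cos_sq θ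
  · linear_combination sin φ * sin_sq_add_cos_sq θ

lemma oangle_chord_neg (θ φ : ℝ) (hφ : 0 < sin (φ / 2)) :
    stdOrient.oangle (pt (cos (θ + φ)) (sin (θ + φ)) - pt (cos θ) (sin θ))
      (-pt (cos θ) (sin θ)) = ((π / 2 - φ / 2 : ℝ) : Real.Angle) := by
  have hpolar : (⟨1 - cos φ, sin φ⟩ : ℂ) = ((2 * sin (φ / 2) : ℝ) : ℂ) *
      (Real.Angle.cos (π / 2 - φ / 2 : ℝ) + Real.Angle.sin (π / 2 - φ / 2 : ℝ) * Complex.I) := by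
    rw [Real.Angle.cos_coe, Real.Angle.sin_coe, cos_pi_div_two_sub, sin_pi_div_two_sub]
    have hcos : cos φ = cos (φ / 2) ^ 2 - sin (φ / 2) ^ 2 := by
      rw [← cos_two_mul', mul_div_cancel₀ φ two_ne_zero]
    have hsin : sin φ = 2 * sin (φ / 2) * cos (φ / 2) := by
      rw [← sin_two_mul, mul_div_cancel₀ φ two_ne_zero]
    apply Complex.ext <;>
      simp only [Complex.mul_re, Complex.mul_im, Complex.add_re, Complex.add_im,
        Complex.ofReal_re, Complex.ofReal_im, Complex.I_re, Complex.I_im]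
    · linear_combination -hcos - sin_sq_add_cos_sq (φ / 2)
    · linear_combination hsin
  rw [Orientation.oangle, kahler_chord_neg, hpolar,
    Complex.arg_mul_cos_add_sin_mul_I_coe_angle (by positivity)]

lemma angleIco_coe_s15 {x : ℝ} (h0 : 0 ≤ x) (h2π : x < 2 * π) : angleIco x = x := by
  rcases le_or_gt x π with hπ | hπ
  · rw [angleIco, Real.Angle.toReal_coe_eq_self_iff.2 ⟨by linarith [pi_pos], hπ⟩, if_pos h0]
  · rw [angleIco, Real.Angle.toReal_coe_eq_self_sub_two_pi_iff.2 ⟨hπ, by linarith⟩,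
      if_neg (by linarith)]
    ring

theorem stmt15_general (n : ℕ) (hn : 3 ≤ n) (k : ℕ) :
    adist 0
      ⟨pt (cos (2 * π * k / n)) (sin (2 * π * k / n)),
        pt (cos (2 * π * (k + 1) / n)) (sin (2 * π * (k + 1) / n)) -
          pt (cos (2 * π * k / n)) (sin (2 * π * k / n))⟩ =
      π / 2 - π / n := by
  have hn2 : (2 : ℝ) ≤ n := by exact_mod_cast (by omega : 2 ≤ n)
  have hπn_pos : 0 < π / n := by positivity
  have hπn_le : π / n ≤ π / 2 := div_le_div_of_nonneg_left pi_pos.le two_pos hn2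
  set θ := 2 * π * k / n
  have hnext : 2 * π * (k + 1) / n = θ + 2 * π / n := by ring
  have hhalf : 2 * π / n / 2 = π / n := by ring
  have hsin : 0 < sin (2 * π / n / 2) := by
    rw [hhalf]
    exact sin_pos_of_pos_of_lt_pi hπn_pos (by linarith [pi_pos])
  have hapex : (0 : Pt) ≠ pt (cos θ) (sin θ) :=
    (pt_ne_zero_of_sq_add_sq_ne_zero (by rw [cos_sq_add_sin_sq]; exact one_ne_zero)).symm
  rw [adist, if_neg hapex, zero_sub, hnext, oangle_chord_neg θ _ hsin, hhalf]
  exact angleIco_coe_s15 (by linarith) (by linarith [pi_pos])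

/-- for the regular `n`-gon inscribed in the unit circle, the angular distance
from each edge-aligned ray to the center is `π/2 - π/n`. -/
theorem stmt15 (n : ℕ) (hn : 3 ≤ n) (k : ℕ) (hk : k < n) :
    adist 0
      ⟨pt (cos (2 * π * k / n)) (sin (2 * π * k / n)),
        pt (cos (2 * π * (k + 1) / n)) (sin (2 * π * (k + 1) / n)) -
          pt (cos (2 * π * k / n)) (sin (2 * π * k / n))⟩ =
      π / 2 - π / n :=
  stmt15_general n hn k
end
end
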